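/- Let σ be the symmetric 3-tensor on ℝⁿ (n = k+1) defined by σ₁₁₁ = kλ, σ_{1ll} = −λ for 2 ≤ l ≤ n (together with all permutations of indices), and all other components zero, where λ = 1/√n. Then the fundamental matrix S_{ij} = ∑_{p,q} σ_{ipq} σ_{jpq} has eigenvalues λ₁ = λ²(n−1)n = (n−1) and λ₂ = … = λₙ = 2λ² = 2/n; moreover the trace tr S plus λ₂ equals n + 1. -/

import Mathlib

/-!
A component `σ i p q` can be nonzero only when one index is the axis `a` and the other two agree.
In each product `σ i p q * σ j p q` the pair `(p, q)` then determines the free index, so `i = j`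
and `S` is diagonal. On the diagonal, `S a a` collects the squares `σ a p p ²`, i.e.
`((n-1)λ)² + (n-1)λ² = n - 1` since `λ² = 1/n`, while for `i ≠ a` only `(p, q) = (a, i), (i, a)`
contribute, giving `2λ²`.
-/

open Finset

section FundamentalMatrix

variable {ι : Type*}

def fundamentalMatrix [Fintype ι] (σ : ι → ι → ι → ℝ) : Matrix ι ι ℝ :=
  fun i j => ∑ p, ∑ q, σ i p q * σ j p q

def SupportedOnAxis (σ : ι → ι → ι → ℝ) (a : ι) : Prop :=
  ∀ i j k, ¬((i = a ∧ j = k) ∨ (j = a ∧ i = k) ∨ (k = a ∧ i = j)) → σ i j k = 0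

variable {σ : ι → ι → ι → ℝ} {a : ι}

namespace SupportedOnAxis

theorem apply_eq_zero_of_ne (hσ : SupportedOnAxis σ a) {p q : ι} (hpq : p ≠ q) :
    σ a p q = 0 :=
  hσ a p q (by grind)

theorem apply_eq_zero_of_ne_axis (hσ : SupportedOnAxis σ a) {i p q : ι} (hi : i ≠ a)
    (h₁ : ¬(p = a ∧ q = i)) (h₂ : ¬(p = i ∧ q = a)) : σ i p q = 0 :=
  hσ i p q (by grind)

theorem mul_eq_zero_of_ne (hσ : SupportedOnAxis σ a) {i j : ι} (hij : i ≠ j) (p q : ι) :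
    σ i p q * σ j p q = 0 := by
  by_contra h
  obtain ⟨hi, hj⟩ := mul_ne_zero_iff.mp h
  have hi' := mt (hσ i p q) hi
  have hj' := mt (hσ j p q) hj
  grind

variable [Fintype ι]

theorem fundamentalMatrix_apply_of_ne (hσ : SupportedOnAxis σ a) {i j : ι} (hij : i ≠ j) :
    fundamentalMatrix σ i j = 0 :=
  sum_eq_zero fun p _ => sum_eq_zero fun q _ => hσ.mul_eq_zero_of_ne hij p q

theorem fundamentalMatrix_apply_axis (hσ : SupportedOnAxis σ a) :
    fundamentalMatrix σ a a = ∑ p, σ a p p ^ 2 := by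
  refine sum_congr rfl fun p _ => ?_
  rw [sum_eq_single p (fun q _ hqp => by rw [hσ.apply_eq_zero_of_ne (Ne.symm hqp), mul_zero])
    (by simp), sq]

theorem fundamentalMatrix_apply_self_of_ne [DecidableEq ι] (hσ : SupportedOnAxis σ a)
    (hsym₁ : ∀ i j k, σ i j k = σ j i k) (hsym₂ : ∀ i j k, σ i j k = σ i k j)
    {i : ι} (hi : i ≠ a) : fundamentalMatrix σ i i = 2 * σ a i i ^ 2 := by
  have hai : (a, i) ≠ (i, a) := fun h => hi (Prod.ext_iff.mp h).1.symm
  have hsupp : ∀ x ∈ (univ : Finset (ι × ι)), x ∉ ({(a, i), (i, a)} : Finset (ι × ι)) →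
      σ i x.1 x.2 * σ i x.1 x.2 = 0 := fun x _ hx => by
    simp only [mem_insert, mem_singleton, Prod.ext_iff, not_or] at hx
    rw [hσ.apply_eq_zero_of_ne_axis hi hx.1 hx.2, zero_mul]
  calc fundamentalMatrix σ i i = ∑ x : ι × ι, σ i x.1 x.2 * σ i x.1 x.2 :=
        (Fintype.sum_prod_type' _).symm
    _ = σ i a i * σ i a i + σ i i a * σ i i a := by
        rw [← sum_subset (subset_univ _) hsupp, sum_pair hai]
    _ = 2 * σ a i i ^ 2 := by
        rw [hsym₁ i a i, hsym₂ i i a, hsym₁ i a i]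
        ring

end SupportedOnAxis

end FundamentalMatrix

theorem Fintype.sum_eq_add_card_sub_one_mul {ι R : Type*} [Fintype ι] [DecidableEq ι] [Ring R]
    {f : ι → R} (a : ι) {c : R} (hf : ∀ i, i ≠ a → f i = c) :
    ∑ i, f i = f a + ((Fintype.card ι : R) - 1) * c := by
  rw [Fintype.sum_eq_add_sum_compl a,
    Finset.sum_congr rfl (g := fun _ => c) fun i hi => hf i (by simpa using hi), sum_const,
    card_compl, card_singleton, nsmul_eq_mul, Nat.cast_sub (Fintype.card_pos_iff.mpr ⟨a⟩),
    Nat.cast_one]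

/-- For the symmetric 3-tensor σ on ℝⁿ (n ≥ 2) with σ₁₁₁ = (n−1)λ,
σ_{1ll} = −λ for l ≥ 2 (and full symmetry), all other components zero,
where λ = 1/√n: the fundamental matrix S_{ij} = ∑_{p,q} σ_{ipq}σ_{jpq} is
diagonal with eigenvalues λ₁ = n−1 and λ₂ = … = λₙ = 2/n, and
tr S + λ₂ = n + 1. (Indices are 0-based.) -/
theorem calabi_fundamental_matrix (n : ℕ) (hn : 2 ≤ n) (lam : ℝ)
    (hlam : lam = 1 / Real.sqrt n)
    (σ : Fin n → Fin n → Fin n → ℝ)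
    (hsym1 : ∀ i j k, σ i j k = σ j i k)
    (hsym2 : ∀ i j k, σ i j k = σ i k j)
    (h111 : σ ⟨0, by omega⟩ ⟨0, by omega⟩ ⟨0, by omega⟩ = (n - 1) * lam)
    (h1ll : ∀ l : Fin n, l ≠ ⟨0, by omega⟩ → σ ⟨0, by omega⟩ l l = -lam)
    (hzero : ∀ i j k : Fin n,
      ¬((i = ⟨0, by omega⟩ ∧ j = k) ∨ (j = ⟨0, by omega⟩ ∧ i = k) ∨
        (k = ⟨0, by omega⟩ ∧ i = j)) → σ i j k = 0)
    (S : Matrix (Fin n) (Fin n) ℝ)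
    (hS : ∀ i j, S i j = ∑ p, ∑ q, σ i p q * σ j p q) :
    (∀ i j, i ≠ j → S i j = 0) ∧
    S ⟨0, by omega⟩ ⟨0, by omega⟩ = n - 1 ∧
    (∀ i : Fin n, i ≠ ⟨0, by omega⟩ → S i i = 2 / n) ∧
    Matrix.trace S + 2 / n = n + 1 := by
  set a : Fin n := ⟨0, by omega⟩
  have hσ : SupportedOnAxis σ a := hzero
  obtain rfl : S = fundamentalMatrix σ := Matrix.ext hS
  have hn0 : (n : ℝ) ≠ 0 := by positivity
  have hlam_sq : lam ^ 2 = 1 / n := by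
    rw [hlam, div_pow, one_pow, Real.sq_sqrt n.cast_nonneg]
  have hSaa : fundamentalMatrix σ a a = n - 1 := by
    rw [hσ.fundamentalMatrix_apply_axis,
      Fintype.sum_eq_add_card_sub_one_mul (c := lam ^ 2) a fun p hp => by
        rw [h1ll p hp, neg_sq],
      h111, Fintype.card_fin, mul_pow, hlam_sq]
    field_simp
    ring
  have hSii : ∀ i, i ≠ a → fundamentalMatrix σ i i = 2 / n := fun i hi => by
    rw [hσ.fundamentalMatrix_apply_self_of_ne hsym1 hsym2 hi, h1ll i hi, neg_sq, hlam_sq,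
      mul_one_div]
  refine ⟨fun i j => hσ.fundamentalMatrix_apply_of_ne, hSaa, hSii, ?_⟩
  rw [Matrix.trace, Fintype.sum_eq_add_card_sub_one_mul (f := (fundamentalMatrix σ).diag) a hSii,
    Matrix.diag_apply, hSaa, Fintype.card_fin]
  field_simp
  ring
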